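/- A FIFO-ordered lock with non-preemptible critical sections on an m-core system provides a worst-case waiting time of (m-1) times the worst-case critical-section duration. Formally: under the core-injectivity hypothesis with waiter set W, holder h ∉ W, and a duration function d : T → ℝ with 0 ≤ d σ ≤ C for every task σ, a waiter τ ∈ W that must wait for the holder and for every other waiter in W waits at most d h + Σ_{σ ∈ W \ {τ}} d σ ≤ (m - 1) · C. -/

import Mathlib

/-! The holder and the waiters occupy pairwise distinct cores, so there are at most `m` of them.
The tasks that `τ` waits for are the holder and the other waiters: one fewer, hence at most `m - 1`
critical sections of length at most `C` each. -/

open Finset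

theorem Finset.card_le_of_injOn_fin {α : Type*} {m : ℕ} {s : Finset α} {f : α → Fin m}
    (hf : Set.InjOn f s) : #s ≤ m := by
  simpa using card_le_card_of_injOn f (t := univ) (fun _ _ => mem_univ _) hf

theorem Finset.card_insert_erase_add_one {α : Type*} [DecidableEq α] {s : Finset α} {a b : α}
    (ha : a ∉ s) (hb : b ∈ s) : #(insert a (s.erase b)) + 1 = #(insert a s) := by
  rw [card_insert_of_notMem (mt mem_of_mem_erase ha), card_erase_add_one hb,
    card_insert_of_notMem ha]

theorem fifo_waiting_time_bound_general (m : ℕ) (T : Type*) [DecidableEq T]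
    (core : T → Fin m) (W : Finset T) (h : T) (hhW : h ∉ W)
    (hinj : Set.InjOn core (↑W ∪ {h}))
    (C : ℝ) (d : T → ℝ)
    (hd : ∀ σ, 0 ≤ d σ ∧ d σ ≤ C)
    (τ : T) (hτ : τ ∈ W) :
    d h + ∑ σ ∈ W.erase τ, d σ ≤ ((m : ℝ) - 1) * C := by
  have hcores : #(insert h W) ≤ m :=
    card_le_of_injOn_fin (by rwa [coe_insert, ← Set.union_singleton])
  have hblocking : (#(insert h (W.erase τ)) : ℝ) + 1 ≤ m := by
    exact_mod_cast card_insert_erase_add_one hhW hτ ▸ hcores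
  have hC : 0 ≤ C := (hd h).1.trans (hd h).2
  calc d h + ∑ σ ∈ W.erase τ, d σ = ∑ σ ∈ insert h (W.erase τ), d σ :=
        (sum_insert (mt mem_of_mem_erase hhW)).symm
    _ ≤ #(insert h (W.erase τ)) • C := sum_le_card_nsmul _ _ _ fun σ _ => (hd σ).2
    _ ≤ ((m : ℝ) - 1) * C := by
        rw [nsmul_eq_mul]
        exact mul_le_mul_of_nonneg_right (by linarith) hC

/-- A FIFO-ordered lock with non-preemptible critical sections on an `m`-core
system provides a worst-case waiting time of `(m - 1)` times the worst-case
critical-section duration: a waiter `τ ∈ W` that must wait for the holder and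
for every other current waiter waits at most
`d h + ∑ σ ∈ W \ {τ}, d σ ≤ (m - 1) * C`. -/
theorem fifo_waiting_time_bound (m : ℕ) (hm : 2 ≤ m) (T : Type*) [DecidableEq T]
    (core : T → Fin m) (W : Finset T) (h : T) (hhW : h ∉ W)
    (hinj : Set.InjOn core (↑W ∪ {h}))
    (C : ℝ) (hC : 0 ≤ C) (d : T → ℝ)
    (hd : ∀ σ, 0 ≤ d σ ∧ d σ ≤ C)
    (τ : T) (hτ : τ ∈ W) :
    d h + ∑ σ ∈ W.erase τ, d σ ≤ ((m : ℝ) - 1) * C :=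
  fifo_waiting_time_bound_general m T core W h hhW hinj C d hd τ hτ
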